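/- Let the activation satisfy |σ(x)| ≤ |x| for all x. Suppose a network satisfies approximate interpolation ‖Z_L − Y‖_F ≤ ε1 with ε1 < s_K(Y), and has bounded parameter norm ‖θ‖₂² ≤ LK + c. Then the product of the linear layers satisfies κ(W_{L:L1+1}) ≤ exp((1/2)(c + L1·K·log K − 2K·log((s_K(Y) − ε1)/‖X‖_op))). -/

import Mathlib

/-!
Write `G = W_{L:L1+1}`, so that `Z_L = G Z_{L1}`. By Weyl's inequality
`s_K(Z_L) ≥ s_K(Y) - ε1 > 0`, and by Courant–Fischer `s_K(G Z_{L1}) ≤ s_K(G) ‖Z_{L1}‖_F`, while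
`|σ x| ≤ |x|` gives `‖Z_{L1}‖_F ≤ ‖W_{L1}‖_F ⋯ ‖W_1‖_F ‖X‖_op`; this bounds `s_K(G)` from below.
Since `G` has `K` rows, its nonzero singular values are among `s_1, …, s_K`, so
`κ(G) ≤ s_1 / s_K ≤ s_1 ⋯ s_K / s_K^K = √det (G Gᵀ) / s_K^K`. Peeling off one linear layer at a
time and using AM–GM on eigenvalues, `det (G Gᵀ) ≤ ∏_{ℓ > L1} (‖W_ℓ‖²_F / K)^K`. Finally AM–GM on
the `‖W_ℓ‖²_F` under the budget `‖θ‖² ≤ LK + c`, with `1 + u ≤ exp u`, gives the exponential.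
-/

open Matrix Finset Real

/-- Frobenius norm of a real matrix. -/
noncomputable def frobNorm {m n : ℕ} (A : Matrix (Fin m) (Fin n) ℝ) : ℝ :=
  Real.sqrt (∑ i, ∑ j, (A i j) ^ 2)

/-- Operator (spectral) norm of a real matrix. -/
noncomputable def opNorm {m n : ℕ} (A : Matrix (Fin m) (Fin n) ℝ) : ℝ :=
  sSup {x : ℝ | ∃ v : Fin n → ℝ, (∑ i, v i ^ 2) ≤ 1 ∧ x = Real.sqrt (∑ i, (A.mulVec v i) ^ 2)}

theorem Matrix.isHermitian_transpose_mul_self {m n : ℕ} (A : Matrix (Fin m) (Fin n) ℝ) :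
    (Aᵀ * A).IsHermitian :=
  Matrix.isHermitian_iff_isSymm.mpr (by simp [Matrix.IsSymm, Matrix.transpose_mul])

/-- The singular values of a real matrix, in non-increasing order (indexed by columns). -/
noncomputable def svals {m n : ℕ} (A : Matrix (Fin m) (Fin n) ℝ) : Fin n → ℝ := fun i =>
  Real.sqrt ((Matrix.isHermitian_transpose_mul_self A).eigenvalues
    (Tuple.sort ((Matrix.isHermitian_transpose_mul_self A).eigenvalues) i.rev))

/-- `sval A k` is the `k`-th largest singular value of `A` (1-indexed). -/
noncomputable def sval {m n : ℕ} (A : Matrix (Fin m) (Fin n) ℝ) (k : ℕ) : ℝ :=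
  if h : k - 1 < n then svals A ⟨k - 1, h⟩ else 0

/-- Smallest singular value of a (possibly rectangular) matrix. -/
noncomputable def smin {m n : ℕ} (A : Matrix (Fin m) (Fin n) ℝ) : ℝ :=
  sval A (min m n)

/-- Condition number: the ratio between the largest and the smallest *nonzero*
singular values, i.e. the supremum of ratios of nonzero singular values. -/
noncomputable def kappa {m n : ℕ} (A : Matrix (Fin m) (Fin n) ℝ) : ℝ :=
  sSup {x : ℝ | ∃ i j : Fin n, svals A i ≠ 0 ∧ svals A j ≠ 0 ∧ x = svals A i / svals A j}

open scoped RealInnerProductSpace Matrix.Norms.L2Operator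
open WithLp (toLp ofLp)
open Module

lemma Submodule.exists_mem_inf_ne_zero_of_finrank_lt {K V : Type*} [DivisionRing K]
    [AddCommGroup V] [Module K V] [FiniteDimensional K V] {s t : Submodule K V}
    (h : finrank K V < finrank K s + finrank K t) : ∃ x ∈ s ⊓ t, x ≠ 0 := by
  refine Submodule.exists_mem_ne_zero_of_ne_bot fun hbot => ?_
  have := Submodule.finrank_sup_add_finrank_inf_eq s t
  have := Submodule.finrank_le (s ⊔ t)
  rw [hbot, finrank_bot] at *
  omega

lemma Submodule.finrank_map_eq_of_forall_mem_eq_zero {K V V₂ : Type*} [DivisionRing K]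
    [AddCommGroup V] [Module K V] [AddCommGroup V₂] [Module K V₂] {f : V →ₗ[K] V₂}
    {W : Submodule K V} [FiniteDimensional K W] (h : ∀ x ∈ W, f x = 0 → x = 0) :
    finrank K (W.map f) = finrank K W := by
  rw [← LinearMap.range_domRestrict]
  refine LinearMap.finrank_range_of_inj ((injective_iff_map_eq_zero _).2 fun x hx => ?_)
  exact Subtype.ext (h x x.2 hx)

lemma exists_finrank_le_forall_inner_eq_zero {E : Type*} [NormedAddCommGroup E]
    [InnerProductSpace ℝ E] [FiniteDimensional ℝ E] {ι : Type*} (v : ι → E) (s : Finset ι) :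
    ∃ W : Submodule ℝ E, finrank ℝ E ≤ finrank ℝ W + s.card ∧ ∀ x ∈ W, ∀ i ∈ s, ⟪v i, x⟫ = 0 := by
  let f : E →ₗ[ℝ] s → ℝ := LinearMap.pi fun i => innerₛₗ ℝ (v i)
  refine ⟨LinearMap.ker f, ?_, fun x hx i hi => congrFun hx ⟨i, hi⟩⟩
  have h1 := f.finrank_range_add_finrank_ker
  have h2 : finrank ℝ (LinearMap.range f) ≤ s.card := (Submodule.finrank_le _).trans (by simp)
  omega

lemma Real.prod_le_sum_div_card_pow {ι : Type*} (s : Finset ι) {f : ι → ℝ}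
    (hf : ∀ i ∈ s, 0 ≤ f i) : ∏ i ∈ s, f i ≤ ((∑ i ∈ s, f i) / s.card) ^ s.card := by
  rcases s.eq_empty_or_nonempty with rfl | hs
  · simp
  have hc : (0 : ℝ) < s.card := by exact_mod_cast hs.card_pos
  have hgm := Real.geom_mean_le_arith_mean_weighted s (fun _ => (s.card : ℝ)⁻¹) f
    (fun _ _ => by positivity) (by simp [hc.ne']) hf
  rw [Real.finsetProd_rpow s f hf, ← mul_sum, inv_mul_eq_div] at hgm
  calc ∏ i ∈ s, f i = ((∏ i ∈ s, f i) ^ (s.card : ℝ)⁻¹) ^ s.card := by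
        rw [← Real.rpow_natCast, ← Real.rpow_mul (prod_nonneg hf), inv_mul_cancel₀ hc.ne',
          Real.rpow_one]
    _ ≤ _ := pow_le_pow_left₀ (by positivity [prod_nonneg hf]) hgm _

lemma Real.prod_le_pow_card_mul_exp {ι : Type*} (s : Finset ι) {a : ι → ℝ}
    (ha : ∀ i ∈ s, 0 ≤ a i) {K c : ℝ} (hK : 0 < K) (hsum : ∑ i ∈ s, a i ≤ s.card * K + c) :
    ∏ i ∈ s, a i ≤ K ^ s.card * Real.exp (c / K) := by
  rcases s.eq_empty_or_nonempty with rfl | hs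
  · simp only [sum_empty, card_empty, Nat.cast_zero, zero_mul, zero_add, prod_empty, pow_zero,
      one_mul] at hsum ⊢
    exact Real.one_le_exp (div_nonneg hsum hK.le)
  have hc : (0 : ℝ) < s.card := by exact_mod_cast hs.card_pos
  have hmean : (∑ i ∈ s, a i) / s.card ≤ K * Real.exp (c / (s.card * K)) := by
    rw [div_le_iff₀ hc]
    calc ∑ i ∈ s, a i ≤ s.card * K + c := hsum
      _ = K * (c / (s.card * K) + 1) * s.card := by field_simp; ring
      _ ≤ K * Real.exp (c / (s.card * K)) * s.card := by
          gcongr; exact Real.add_one_le_exp _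
  calc ∏ i ∈ s, a i ≤ ((∑ i ∈ s, a i) / s.card) ^ s.card := Real.prod_le_sum_div_card_pow s ha
    _ ≤ (K * Real.exp (c / (s.card * K))) ^ s.card :=
        pow_le_pow_left₀ (div_nonneg (sum_nonneg ha) hc.le) hmean _
    _ = K ^ s.card * Real.exp (c / K) := by
        rw [mul_pow, ← Real.exp_nat_mul]
        field_simp

section Matrices

variable {m n p : ℕ}

lemma frobNorm_nonneg (A : Matrix (Fin m) (Fin n) ℝ) : 0 ≤ frobNorm A :=
  Real.sqrt_nonneg _

lemma frobNorm_sq (A : Matrix (Fin m) (Fin n) ℝ) : frobNorm A ^ 2 = ∑ i, ∑ j, A i j ^ 2 :=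
  Real.sq_sqrt (by positivity)

lemma frobNorm_map_le (A : Matrix (Fin m) (Fin n) ℝ) {σ : ℝ → ℝ} (hσ : ∀ x, |σ x| ≤ |x|) :
    frobNorm (A.map σ) ≤ frobNorm A :=
  Real.sqrt_le_sqrt <| sum_le_sum fun i _ => sum_le_sum fun j _ => sq_le_sq.2 (hσ _)

lemma trace_mul_transpose_eq_frobNorm_sq (A : Matrix (Fin m) (Fin n) ℝ) :
    (A * Aᵀ).trace = frobNorm A ^ 2 := by
  rw [frobNorm_sq]
  simp [Matrix.trace, Matrix.mul_apply, sq]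

lemma norm_toLp_sq (v : Fin n → ℝ) : ‖toLp 2 v‖ ^ 2 = ∑ i, v i ^ 2 :=
  EuclideanSpace.real_norm_sq_eq _

lemma norm_toLpLin_le_frobNorm (A : Matrix (Fin m) (Fin n) ℝ) (x : EuclideanSpace ℝ (Fin n)) :
    ‖toLpLin 2 2 A x‖ ≤ frobNorm A * ‖x‖ := by
  rw [← sq_le_sq₀ (norm_nonneg _) (mul_nonneg (frobNorm_nonneg A) (norm_nonneg _)), mul_pow,
    frobNorm_sq, EuclideanSpace.real_norm_sq_eq, EuclideanSpace.real_norm_sq_eq, sum_mul]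
  refine sum_le_sum fun i _ => ?_
  simpa [Matrix.mulVec, dotProduct] using sum_mul_sq_le_sq_mul_sq univ (A i) (ofLp x)

lemma opNorm_eq_l2_opNorm (A : Matrix (Fin m) (Fin n) ℝ) : opNorm A = ‖A‖ := by
  rw [l2_opNorm_def, ← ContinuousLinearMap.sSup_unitClosedBall_eq_norm, opNorm]
  congr 1
  ext r
  simp only [Set.mem_ofPred_eq, Set.mem_image, Metric.mem_closedBall, dist_zero_right]
  constructor
  · rintro ⟨v, hv, rfl⟩
    refine ⟨toLp 2 v, ?_, ?_⟩
    · rwa [← sq_le_one_iff₀ (norm_nonneg _), norm_toLp_sq]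
    · rw [← Real.sqrt_sq (norm_nonneg _)]
      exact congrArg Real.sqrt (norm_toLp_sq (A *ᵥ v))
  · rintro ⟨x, hx, rfl⟩
    refine ⟨ofLp x, ?_, ?_⟩
    · rw [← norm_toLp_sq, WithLp.toLp_ofLp]; exact pow_le_one₀ (norm_nonneg _) hx
    · rw [← Real.sqrt_sq (norm_nonneg _)]
      exact congrArg Real.sqrt (norm_toLp_sq (A *ᵥ ofLp x))

lemma opNorm_nonneg (A : Matrix (Fin m) (Fin n) ℝ) : 0 ≤ opNorm A :=
  opNorm_eq_l2_opNorm A ▸ norm_nonneg A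

lemma opNorm_le_frobNorm (A : Matrix (Fin m) (Fin n) ℝ) : opNorm A ≤ frobNorm A := by
  rw [opNorm_eq_l2_opNorm, l2_opNorm_def]
  exact ContinuousLinearMap.opNorm_le_bound _ (frobNorm_nonneg A) (norm_toLpLin_le_frobNorm A)

/-- Row by row, `‖a_i B‖ ≤ ‖Bᵀ‖ ‖a_i‖`, and the operator norm is invariant under transposition. -/
lemma frobNorm_mul_le_frobNorm_mul_opNorm (A : Matrix (Fin m) (Fin n) ℝ)
    (B : Matrix (Fin n) (Fin p) ℝ) : frobNorm (A * B) ≤ frobNorm A * opNorm B := by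
  have hrow (i : Fin m) : ∑ j, (A * B) i j ^ 2 ≤ (∑ k, A i k ^ 2) * opNorm B ^ 2 := by
    have h : ‖toLp 2 (Bᵀ *ᵥ A i)‖ ≤ ‖Bᵀ‖ * ‖toLp 2 (A i)‖ := l2_opNorm_mulVec Bᵀ (toLp 2 (A i))
    rw [← conjTranspose_eq_transpose_of_trivial, l2_opNorm_conjTranspose,
      conjTranspose_eq_transpose_of_trivial, ← opNorm_eq_l2_opNorm] at h
    have hAB : (A * B) i = Bᵀ *ᵥ A i := by
      ext j; simp [Matrix.mul_apply, Matrix.mulVec, dotProduct, mul_comm]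
    rw [hAB, ← norm_toLp_sq, ← norm_toLp_sq, mul_comm, ← mul_pow]
    exact pow_le_pow_left₀ (norm_nonneg _) h 2
  rw [← sq_le_sq₀ (frobNorm_nonneg _) (mul_nonneg (frobNorm_nonneg _) (opNorm_nonneg B)),
    mul_pow, frobNorm_sq, frobNorm_sq, sum_mul]
  exact sum_le_sum fun i _ => hrow i

lemma frobNorm_mul_le (A : Matrix (Fin m) (Fin n) ℝ) (B : Matrix (Fin n) (Fin p) ℝ) :
    frobNorm (A * B) ≤ frobNorm A * frobNorm B :=
  (frobNorm_mul_le_frobNorm_mul_opNorm A B).trans <|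
    mul_le_mul_of_nonneg_left (opNorm_le_frobNorm B) (frobNorm_nonneg A)

lemma inner_toLpLin_toLpLin (A : Matrix (Fin m) (Fin n) ℝ) (x y : EuclideanSpace ℝ (Fin n)) :
    ⟪toLpLin 2 2 A x, toLpLin 2 2 A y⟫ = ⟪x, toLpLin 2 2 (Aᵀ * A) y⟫ := by
  simp only [EuclideanSpace.inner_eq_star_dotProduct, ofLp_toLpLin, toLin'_apply, star_trivial,
    ← mulVec_mulVec, dotProduct_mulVec, vecMul_transpose, dotProduct_comm]

lemma frobNorm_transpose (A : Matrix (Fin m) (Fin n) ℝ) : frobNorm Aᵀ = frobNorm A := by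
  rw [frobNorm, frobNorm, sum_comm]; rfl

lemma opNorm_le_one_of_transpose_mul_self_eq_one {V : Matrix (Fin m) (Fin n) ℝ}
    (hV : Vᵀ * V = 1) : opNorm V ≤ 1 := by
  rw [opNorm_eq_l2_opNorm, l2_opNorm_def]
  refine ContinuousLinearMap.opNorm_le_bound _ zero_le_one fun x => ?_
  have h := inner_toLpLin_toLpLin V x x
  rw [hV, toLpLin_one, LinearMap.id_apply, real_inner_self_eq_norm_sq,
    real_inner_self_eq_norm_sq] at h
  rw [one_mul]
  exact ((sq_eq_sq₀ (norm_nonneg _) (norm_nonneg _)).1 h).le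

lemma frobNorm_mul_le_of_mul_transpose_eq_one {Q : Matrix (Fin m) (Fin n) ℝ} (hQ : Q * Qᵀ = 1)
    (W : Matrix (Fin n) (Fin p) ℝ) : frobNorm (Q * W) ≤ frobNorm W := by
  have hQt : opNorm Qᵀ ≤ 1 := opNorm_le_one_of_transpose_mul_self_eq_one (by simpa using hQ)
  calc frobNorm (Q * W) = frobNorm (Wᵀ * Qᵀ) := by rw [← transpose_mul, frobNorm_transpose]
    _ ≤ frobNorm Wᵀ * opNorm Qᵀ := frobNorm_mul_le_frobNorm_mul_opNorm _ _
    _ ≤ frobNorm W := by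
      rw [frobNorm_transpose]
      exact mul_le_of_le_one_right (frobNorm_nonneg W) hQt

/-- `svalPerm A i` is the index, among `(isHermitian_transpose_mul_self A).eigenvalues`, of the
`i`-th largest eigenvalue of `Aᵀ * A`. -/
noncomputable def svalPerm (A : Matrix (Fin m) (Fin n) ℝ) : Equiv.Perm (Fin n) :=
  Fin.revPerm.trans (Tuple.sort (isHermitian_transpose_mul_self A).eigenvalues)

noncomputable def rightSingularBasis (A : Matrix (Fin m) (Fin n) ℝ) :
    OrthonormalBasis (Fin n) ℝ (EuclideanSpace ℝ (Fin n)) :=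
  (isHermitian_transpose_mul_self A).eigenvectorBasis.reindex (svalPerm A).symm

lemma sq_svals (A : Matrix (Fin m) (Fin n) ℝ) (i : Fin n) :
    svals A i ^ 2 = (isHermitian_transpose_mul_self A).eigenvalues (svalPerm A i) := by
  refine Real.sq_sqrt ?_
  simpa [conjTranspose_eq_transpose_of_trivial] using
    eigenvalues_conjTranspose_mul_self_nonneg A (Tuple.sort _ i.rev)

lemma svals_nonneg (A : Matrix (Fin m) (Fin n) ℝ) (i : Fin n) : 0 ≤ svals A i :=
  Real.sqrt_nonneg _

lemma svals_antitone (A : Matrix (Fin m) (Fin n) ℝ) : Antitone (svals A) := fun _ _ hij =>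
  Real.sqrt_le_sqrt <|
    Tuple.monotone_sort (isHermitian_transpose_mul_self A).eigenvalues (Fin.rev_le_rev.2 hij)

lemma toLpLin_transpose_mul_self_rightSingularBasis (A : Matrix (Fin m) (Fin n) ℝ) (i : Fin n) :
    toLpLin 2 2 (Aᵀ * A) (rightSingularBasis A i) = svals A i ^ 2 • rightSingularBasis A i := by
  rw [sq_svals, rightSingularBasis, OrthonormalBasis.reindex_apply, Equiv.symm_symm, toLpLin_apply,
    (isHermitian_transpose_mul_self A).mulVec_eigenvectorBasis]
  rfl

lemma inner_toLpLin_rightSingularBasis (A : Matrix (Fin m) (Fin n) ℝ) (i j : Fin n) :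
    ⟪toLpLin 2 2 A (rightSingularBasis A i), toLpLin 2 2 A (rightSingularBasis A j)⟫ =
      if i = j then svals A i ^ 2 else 0 := by
  rw [inner_toLpLin_toLpLin, toLpLin_transpose_mul_self_rightSingularBasis, real_inner_smul_right,
    orthonormal_iff_ite.1 (rightSingularBasis A).orthonormal]
  split_ifs with h <;> simp [h]

lemma norm_toLpLin_sq (A : Matrix (Fin m) (Fin n) ℝ) (x : EuclideanSpace ℝ (Fin n)) :
    ‖toLpLin 2 2 A x‖ ^ 2 = ∑ i, svals A i ^ 2 * ⟪rightSingularBasis A i, x⟫ ^ 2 := by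
  conv_lhs => rw [← (rightSingularBasis A).sum_repr' x]
  simp only [← real_inner_self_eq_norm_sq, map_sum, map_smul, sum_inner, inner_sum,
    real_inner_smul_left, real_inner_smul_right, inner_toLpLin_rightSingularBasis]
  simp [sq, mul_comm, mul_left_comm]

lemma norm_toLpLin_sq_le (A : Matrix (Fin m) (Fin n) ℝ) {k : Fin n} {x : EuclideanSpace ℝ (Fin n)}
    (hx : ∀ i < k, ⟪rightSingularBasis A i, x⟫ = 0) :
    ‖toLpLin 2 2 A x‖ ^ 2 ≤ svals A k ^ 2 * ‖x‖ ^ 2 := by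
  rw [norm_toLpLin_sq, ← (rightSingularBasis A).sum_sq_inner_right x, mul_sum]
  refine sum_le_sum fun i _ => ?_
  rcases lt_or_ge i k with hik | hki
  · simp [hx i hik]
  · gcongr
    · exact svals_nonneg A i
    · exact svals_antitone A hki

lemma svals_sq_mul_norm_sq_le (A : Matrix (Fin m) (Fin n) ℝ) {k : Fin n}
    {x : EuclideanSpace ℝ (Fin n)} (hx : ∀ i, k < i → ⟪rightSingularBasis A i, x⟫ = 0) :
    svals A k ^ 2 * ‖x‖ ^ 2 ≤ ‖toLpLin 2 2 A x‖ ^ 2 := by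
  rw [norm_toLpLin_sq, ← (rightSingularBasis A).sum_sq_inner_right x, mul_sum]
  refine sum_le_sum fun i _ => ?_
  rcases le_or_gt i k with hik | hki
  · gcongr
    · exact svals_nonneg A k
    · exact svals_antitone A hik
  · simp [hx i hki]

/-- Courant–Fischer: `W` meets the span of `vₖ, vₖ₊₁, …` (`v = rightSingularBasis A`), on which
`‖A x‖ ≤ sₖ ‖x‖`. -/
lemma le_svals_of_forall_mul_norm_le (A : Matrix (Fin m) (Fin n) ℝ) (k : Fin n) {t : ℝ}
    (ht : 0 ≤ t) {W : Submodule ℝ (EuclideanSpace ℝ (Fin n))} (hW : k.val + 1 ≤ finrank ℝ W)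
    (h : ∀ x ∈ W, t * ‖x‖ ≤ ‖toLpLin 2 2 A x‖) : t ≤ svals A k := by
  obtain ⟨T, hT, hTorth⟩ :=
    exists_finrank_le_forall_inner_eq_zero (rightSingularBasis A) (Finset.Iio k)
  rw [finrank_euclideanSpace_fin, Fin.card_Iio] at hT
  obtain ⟨x, ⟨hxW, hxT⟩, hx0⟩ := Submodule.exists_mem_inf_ne_zero_of_finrank_lt (s := W) (t := T)
    (by rw [finrank_euclideanSpace_fin]; omega)
  have hAx := norm_toLpLin_sq_le A fun i hi => hTorth x hxT i (Finset.mem_Iio.2 hi)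
  have htx := pow_le_pow_left₀ (mul_nonneg ht (norm_nonneg x)) (h x hxW) 2
  rw [mul_pow] at htx
  have hx : 0 < ‖x‖ ^ 2 := by positivity
  exact (sq_le_sq₀ ht (svals_nonneg A k)).1 (le_of_mul_le_mul_right (htx.trans hAx) hx)

/-- Courant–Fischer: take for `W` the span of `v₀, …, vₖ` (`v = rightSingularBasis A`). -/
lemma exists_finrank_le_forall_svals_mul_norm_le (A : Matrix (Fin m) (Fin n) ℝ) (k : Fin n) :
    ∃ W : Submodule ℝ (EuclideanSpace ℝ (Fin n)), k.val + 1 ≤ finrank ℝ W ∧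
      ∀ x ∈ W, svals A k * ‖x‖ ≤ ‖toLpLin 2 2 A x‖ := by
  obtain ⟨W, hW, hWorth⟩ :=
    exists_finrank_le_forall_inner_eq_zero (rightSingularBasis A) (Finset.Ioi k)
  rw [finrank_euclideanSpace_fin, Fin.card_Ioi] at hW
  refine ⟨W, by omega, fun x hx => ?_⟩
  have hAx := svals_sq_mul_norm_sq_le A fun i hi => hWorth x hx i (Finset.mem_Ioi.2 hi)
  rw [← mul_pow] at hAx
  exact (sq_le_sq₀ (mul_nonneg (svals_nonneg A k) (norm_nonneg x)) (norm_nonneg _)).1 hAx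

/-- If `sₖ > 0`, `A` is injective on a `(k + 1)`-dimensional subspace, so `k < m`. -/
lemma svals_eq_zero_of_le (A : Matrix (Fin m) (Fin n) ℝ) {k : Fin n} (hk : m ≤ k.val) :
    svals A k = 0 := by
  by_contra hne
  have hpos := (svals_nonneg A k).lt_of_ne' hne
  obtain ⟨W, hW, hWA⟩ := exists_finrank_le_forall_svals_mul_norm_le A k
  have hmap := Submodule.finrank_map_eq_of_forall_mem_eq_zero (f := toLpLin 2 2 A) fun x hx h0 =>
    norm_eq_zero.1 <| le_antisymm (nonpos_of_mul_nonpos_right (by simpa [h0] using hWA x hx) hpos)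
      (norm_nonneg x)
  have hWm := (hW.trans_eq hmap.symm).trans (Submodule.finrank_le (W.map (toLpLin 2 2 A)))
  rw [finrank_euclideanSpace_fin] at hWm
  omega

/-- Weyl's perturbation inequality (the Frobenius norm bounds the operator norm). -/
lemma svals_sub_frobNorm_le (A B : Matrix (Fin m) (Fin n) ℝ) (k : Fin n) :
    svals B k - frobNorm (A - B) ≤ svals A k := by
  rcases le_or_gt (svals B k - frobNorm (A - B)) 0 with ht | ht
  · exact ht.trans (svals_nonneg A k)
  obtain ⟨W, hW, hWB⟩ := exists_finrank_le_forall_svals_mul_norm_le B k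
  refine le_svals_of_forall_mul_norm_le A k ht.le hW fun x hx => ?_
  have hsub : toLpLin 2 2 B x = toLpLin 2 2 A x - toLpLin 2 2 (A - B) x := by simp
  have htri := norm_sub_le (toLpLin 2 2 A x) (toLpLin 2 2 (A - B) x)
  rw [← hsub] at htri
  linarith [hWB x hx, norm_toLpLin_le_frobNorm (A - B) x,
    sub_mul (svals B k) (frobNorm (A - B)) ‖x‖]

/-- `B` maps a `(k + 1)`-dimensional subspace on which `A B` has gain `sₖ(A B)` injectively into
`ℝ^p`, and `A` has gain at least `sₖ(A B) / c` on its image. -/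
lemma exists_lt_and_svals_mul_le (A : Matrix (Fin m) (Fin p) ℝ) (B : Matrix (Fin p) (Fin n) ℝ)
    (k : Fin n) {c : ℝ} (hB : ∀ x, ‖toLpLin 2 2 B x‖ ≤ c * ‖x‖) (hpos : 0 < svals (A * B) k) :
    ∃ hkp : k.val < p, svals (A * B) k ≤ svals A ⟨k, hkp⟩ * c := by
  set s := svals (A * B) k
  obtain ⟨W, hW, hWAB⟩ := exists_finrank_le_forall_svals_mul_norm_le (A * B) k
  simp only [toLpLin_mul_same, LinearMap.comp_apply] at hWAB
  have hinj (x) (hx : x ∈ W) (h0 : toLpLin 2 2 B x = 0) : x = 0 :=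
    norm_eq_zero.1 <| le_antisymm (nonpos_of_mul_nonpos_right (by simpa [h0] using hWAB x hx) hpos)
      (norm_nonneg x)
  have hmap := Submodule.finrank_map_eq_of_forall_mem_eq_zero hinj
  have hkp : k.val < p := by
    have hWp := (hW.trans_eq hmap.symm).trans (Submodule.finrank_le (W.map (toLpLin 2 2 B)))
    rw [finrank_euclideanSpace_fin] at hWp
    omega
  obtain ⟨x, hxW, hx0⟩ :=
    Submodule.exists_mem_ne_zero_of_ne_bot (p := W) (by rintro rfl; simp at hW)
  have hc : 0 < c := pos_of_mul_pos_left
    ((norm_pos_iff.2 (mt (hinj x hxW) hx0)).trans_le (hB x)) (norm_nonneg x)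
  refine ⟨hkp, (div_le_iff₀ hc).1 <| le_svals_of_forall_mul_norm_le A ⟨k, hkp⟩
    (div_pos hpos hc).le (hmap ▸ hW) ?_⟩
  rintro _ ⟨x, hx, rfl⟩
  calc s / c * ‖toLpLin 2 2 B x‖ ≤ s / c * (c * ‖x‖) := by gcongr; exact hB x
    _ = s * ‖x‖ := by field_simp
    _ ≤ _ := hWAB x hx

lemma Matrix.PosSemidef.det_le_trace_div_pow {A : Matrix (Fin m) (Fin m) ℝ} (hA : A.PosSemidef) :
    A.det ≤ (A.trace / m) ^ m := by
  simpa [hA.isHermitian.det_eq_prod_eigenvalues, hA.isHermitian.trace_eq_sum_eigenvalues] using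
    Real.prod_le_sum_div_card_pow univ fun i _ => hA.eigenvalues_nonneg i

lemma posSemidef_mul_transpose_self (A : Matrix (Fin m) (Fin n) ℝ) :
    (A * Aᵀ).PosSemidef := by
  simpa [conjTranspose_eq_transpose_of_trivial] using posSemidef_self_mul_conjTranspose A

open scoped MatrixOrder in
lemma Matrix.PosSemidef.exists_mul_transpose_eq {P : Matrix (Fin m) (Fin m) ℝ}
    (hP : P.PosSemidef) : ∃ R : Matrix (Fin m) (Fin m) ℝ, R * Rᵀ = P := by
  refine ⟨CFC.sqrt P, ?_⟩
  have hR : (CFC.sqrt P)ᵀ = CFC.sqrt P := by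
    simpa [conjTranspose_eq_transpose_of_trivial] using
      (nonneg_iff_posSemidef.1 (CFC.sqrt_nonneg P)).isHermitian.eq
  rw [hR, CFC.sqrt_mul_sqrt_self P (nonneg_iff_posSemidef.2 hP)]

/-- Writing `C Cᵀ = R Rᵀ`, the rows of `Q = R⁻¹ C` are orthonormal and
`C W (C W)ᵀ = R (Q W) (Q W)ᵀ Rᵀ`; AM–GM bounds `det ((Q W) (Q W)ᵀ)` through its trace
`‖Q W‖²_F ≤ ‖W‖²_F`. -/
lemma det_mul_mul_transpose_le (C : Matrix (Fin m) (Fin n) ℝ) (W : Matrix (Fin n) (Fin p) ℝ) :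
    ((C * W) * (C * W)ᵀ).det ≤ (C * Cᵀ).det * (frobNorm W ^ 2 / m) ^ m := by
  by_cases hdet : (C * Cᵀ).det = 0
  · obtain ⟨x, hx0, hx⟩ := exists_mulVec_eq_zero_iff.2 hdet
    have hCx : Cᵀ *ᵥ x = 0 := by
      simpa [conjTranspose_eq_transpose_of_trivial] using
        (self_mul_conjTranspose_mulVec_eq_zero C x).1 hx
    rw [hdet, zero_mul]
    refine (exists_mulVec_eq_zero_iff.1 ⟨x, hx0, ?_⟩).le
    simp [transpose_mul, ← mulVec_mulVec, hCx]
  obtain ⟨R, hR⟩ := (posSemidef_mul_transpose_self C).exists_mul_transpose_eq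
  have hRunit : IsUnit R.det := by
    refine isUnit_iff_ne_zero.2 fun h => hdet ?_
    rw [← hR, det_mul, h, zero_mul]
  set Q := R⁻¹ * C
  have hQ : Q * Qᵀ = 1 := by
    rw [transpose_mul, Matrix.mul_assoc, ← Matrix.mul_assoc C, ← hR, transpose_nonsing_inv,
      Matrix.mul_assoc, mul_nonsing_inv _ (by rwa [det_transpose]), Matrix.mul_one,
      nonsing_inv_mul _ hRunit]
  have hCW : (C * W) * (C * W)ᵀ = R * ((Q * W) * (Q * W)ᵀ) * Rᵀ := by
    have hC : C = R * Q := by rw [← Matrix.mul_assoc, mul_nonsing_inv _ hRunit, Matrix.one_mul]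
    rw [hC]
    simp only [transpose_mul, Matrix.mul_assoc]
  have htrace : ((Q * W) * (Q * W)ᵀ).trace ≤ frobNorm W ^ 2 := by
    rw [trace_mul_transpose_eq_frobNorm_sq]
    exact pow_le_pow_left₀ (frobNorm_nonneg _) (frobNorm_mul_le_of_mul_transpose_eq_one hQ W) 2
  calc ((C * W) * (C * W)ᵀ).det = (C * Cᵀ).det * ((Q * W) * (Q * W)ᵀ).det := by
        rw [hCW, ← hR, det_mul, det_mul, det_mul, det_transpose]; ring
    _ ≤ (C * Cᵀ).det * (frobNorm W ^ 2 / m) ^ m := by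
        gcongr
        · exact (posSemidef_mul_transpose_self C).det_nonneg
        · refine (posSemidef_mul_transpose_self _).det_le_trace_div_pow.trans ?_
          have := (posSemidef_mul_transpose_self (Q * W)).trace_nonneg
          gcongr

/-- The columns `A vᵢ` of `C` satisfy `Cᵀ C = diag (sᵢ²)` and `A Aᵀ C = C diag (sᵢ²)`. -/
lemma det_mul_transpose_eq_prod_sq_svals (A : Matrix (Fin m) (Fin n) ℝ) (hmn : m ≤ n)
    (hA : ∀ i : Fin m, svals A (Fin.castLE hmn i) ≠ 0) :
    (A * Aᵀ).det = ∏ i : Fin m, svals A (Fin.castLE hmn i) ^ 2 := by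
  set d : Fin m → ℝ := fun i => svals A (Fin.castLE hmn i) ^ 2
  let u (i : Fin m) : Fin m → ℝ := A *ᵥ ofLp (rightSingularBasis A (Fin.castLE hmn i))
  let C : Matrix (Fin m) (Fin m) ℝ := of fun r s => u s r
  have hCC : Cᵀ * C = diagonal d := by
    ext s t
    have h := inner_toLpLin_rightSingularBasis A (Fin.castLE hmn s) (Fin.castLE hmn t)
    simp only [EuclideanSpace.inner_eq_star_dotProduct, toLpLin_apply, star_trivial,
      (Fin.castLE_injective hmn).eq_iff] at h
    rw [diagonal_apply, ← h, dotProduct_comm]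
    simp [C, u, Matrix.mul_apply, dotProduct]
  have hAC : (A * Aᵀ) * C = C * diagonal d := by
    ext r t
    have h := congrArg ofLp (toLpLin_transpose_mul_self_rightSingularBasis A (Fin.castLE hmn t))
    simp only [toLpLin_apply, WithLp.ofLp_toLp, WithLp.ofLp_smul] at h
    have hu : (A * Aᵀ) *ᵥ u t = d t • u t := by
      simp only [u, mulVec_mulVec, Matrix.mul_assoc]
      rw [← mulVec_mulVec, h, mulVec_smul]
    rw [mul_diagonal, mul_comm]
    exact congrFun hu r
  have hdetC : C.det ≠ 0 := by
    have hsq : C.det * C.det = ∏ i, d i := by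
      rw [← det_diagonal, ← hCC, det_mul, det_transpose]
    intro h
    rw [h, zero_mul] at hsq
    exact prod_ne_zero_iff.2 (fun i _ => pow_ne_zero 2 (hA i)) hsq.symm
  apply mul_right_cancel₀ hdetC
  rw [← det_mul, hAC, det_mul, det_diagonal, mul_comm]

lemma sval_eq_svals_of_pos (A : Matrix (Fin m) (Fin n) ℝ) {k : ℕ} (h : 0 < sval A k) :
    ∃ hk : k - 1 < n, k - 1 < m ∧ sval A k = svals A ⟨k - 1, hk⟩ := by
  have hk : k - 1 < n := by
    by_contra hk
    simp [sval, hk] at h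
  refine ⟨hk, ?_, dif_pos hk⟩
  by_contra hm
  rw [sval, dif_pos hk, svals_eq_zero_of_le A (by simp only; omega)] at h
  exact lt_irrefl _ h

lemma kappa_le_svals_div (M : Matrix (Fin m) (Fin n) ℝ) (hmn : m - 1 < n)
    (hpos : 0 < svals M ⟨m - 1, hmn⟩) :
    kappa M ≤ svals M ⟨0, by omega⟩ / svals M ⟨m - 1, hmn⟩ := by
  refine Real.sSup_le ?_ (div_nonneg (svals_nonneg _ _) hpos.le)
  rintro _ ⟨i, j, -, hj, rfl⟩
  have hjm : j.val ≤ m - 1 := by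
    by_contra h
    exact hj (svals_eq_zero_of_le M (by omega))
  exact div_le_div₀ (svals_nonneg _ _) (svals_antitone M (Fin.le_def.2 (Nat.zero_le _))) hpos
    (svals_antitone M (Fin.le_def.2 hjm))

/-- Every top singular value is at least `s_{m-1}`, so `s₀ / s_{m-1} ≤ ∏ sᵢ / s_{m-1}^m`,
and `∏ sᵢ = √det (M Mᵀ)`. -/
lemma kappa_le_sqrt_det_div_pow (M : Matrix (Fin m) (Fin n) ℝ) (hmn : m - 1 < n) {s : ℝ}
    (hs : 0 < s) (hsM : s ≤ svals M ⟨m - 1, hmn⟩) : kappa M ≤ √(M * Mᵀ).det / s ^ m := by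
  set σ := svals M ⟨m - 1, hmn⟩
  have hσ : 0 < σ := hs.trans_le hsM
  have hm : 0 < m := by
    by_contra h
    exact hσ.ne' (svals_eq_zero_of_le M (by simp only; omega))
  have hmn' : m ≤ n := by omega
  have hle (i : Fin m) : σ ≤ svals M (Fin.castLE hmn' i) :=
    svals_antitone M (Fin.le_def.2 (by simp only [Fin.val_castLE]; omega))
  set P := ∏ i : Fin m, svals M (Fin.castLE hmn' i)
  have hP : 0 ≤ P := prod_nonneg fun i _ => svals_nonneg _ _
  have hdet : √(M * Mᵀ).det = P := by
    rw [det_mul_transpose_eq_prod_sq_svals M hmn' fun i => (hσ.trans_le (hle i)).ne', prod_pow,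
      Real.sqrt_sq hP]
  have htop : svals M ⟨0, by omega⟩ / σ ≤ P / σ ^ m := by
    rw [← Fin.prod_const m σ, ← prod_div_distrib, ← mul_prod_erase univ _ (mem_univ ⟨0, hm⟩),
      Fin.castLE_mk]
    exact le_mul_of_one_le_right (div_nonneg (svals_nonneg _ _) hσ.le)
      (one_le_prod fun i _ => (one_le_div hσ).2 (hle i))
  calc kappa M ≤ P / σ ^ m := (kappa_le_svals_div M hmn hσ).trans htop
    _ ≤ P / s ^ m := div_le_div_of_nonneg_left hP (pow_pos hs m) (pow_le_pow_left₀ hs.le hsM m)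
    _ = √(M * Mᵀ).det / s ^ m := by rw [hdet]

end Matrices

section Network
variable {n : ℕ → ℕ} {N K : ℕ} (W : ∀ ℓ, Matrix (Fin (n ℓ)) (Fin (n (ℓ - 1))) ℝ)

lemma frobNorm_le_prod_mul_opNorm (Z : ∀ ℓ, Matrix (Fin (n ℓ)) (Fin N) ℝ) {σ : ℝ → ℝ}
    (hσ : ∀ x, |σ x| ≤ |x|) {a : ℕ} (ha : 1 ≤ a)
    (hZ : ∀ ℓ, 1 ≤ ℓ → ℓ ≤ a → Z ℓ = (W ℓ * Z (ℓ - 1)).map σ) :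
    frobNorm (Z a) ≤ (∏ j ∈ Ioc 0 a, frobNorm (W j)) * opNorm (Z 0) := by
  induction a, ha using Nat.le_induction with
  | base =>
    have h1 : frobNorm (Z 1) ≤ frobNorm (W 1) * opNorm (Z 0) := by
      rw [hZ 1 le_rfl le_rfl]
      exact (frobNorm_map_le _ hσ).trans (frobNorm_mul_le_frobNorm_mul_opNorm (W 1) (Z 0))
    simpa using h1
  | succ a ha ih =>
    have hstep : frobNorm (Z (a + 1)) ≤ frobNorm (W (a + 1)) * frobNorm (Z a) := by
      rw [hZ (a + 1) (by omega) le_rfl]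
      exact (frobNorm_map_le _ hσ).trans (frobNorm_mul_le (W (a + 1)) (Z a))
    have ih' := ih fun ℓ h1 h2 => hZ ℓ h1 (by omega)
    rw [prod_Ioc_succ_top (Nat.zero_le a)]
    calc frobNorm (Z (a + 1))
        ≤ frobNorm (W (a + 1)) * ((∏ j ∈ Ioc 0 a, frobNorm (W j)) * opNorm (Z 0)) :=
          hstep.trans (mul_le_mul_of_nonneg_left ih' (frobNorm_nonneg _))
      _ = _ := by ring

lemma mul_eq_mul_of_linear_layers (G : ∀ ℓ, Matrix (Fin K) (Fin (n ℓ)) ℝ)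
    (Z : ∀ ℓ, Matrix (Fin (n ℓ)) (Fin N) ℝ) {a b : ℕ} (hab : a ≤ b)
    (hG : ∀ ℓ, a ≤ ℓ → ℓ < b → G ℓ = G (ℓ + 1) * W (ℓ + 1))
    (hZ : ∀ ℓ, a + 1 ≤ ℓ → ℓ ≤ b → Z ℓ = W ℓ * Z (ℓ - 1)) :
    G b * Z b = G a * Z a := by
  induction hab using Nat.decreasingInduction with
  | self => rfl
  | of_succ k hk ih =>
    rw [ih (fun ℓ h1 h2 => hG ℓ (by omega) h2) (fun ℓ h1 h2 => hZ ℓ (by omega) h2),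
      hZ (k + 1) le_rfl hk, hG k le_rfl hk, Matrix.mul_assoc]
    rfl

lemma det_mul_transpose_le_prod (G : ∀ ℓ, Matrix (Fin K) (Fin (n ℓ)) ℝ) {a b : ℕ} (hab : a ≤ b)
    (hG : ∀ ℓ, a ≤ ℓ → ℓ < b → G ℓ = G (ℓ + 1) * W (ℓ + 1)) :
    (G a * (G a)ᵀ).det ≤ (G b * (G b)ᵀ).det * ∏ j ∈ Ioc a b, (frobNorm (W j) ^ 2 / K) ^ K := by
  induction hab using Nat.decreasingInduction with
  | self => simp
  | of_succ k hk ih =>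
    rw [hG k le_rfl hk, ← prod_Ioc_consecutive _ (Nat.le_succ k) hk, Nat.Ioc_succ_singleton,
      prod_singleton, mul_comm (_ ^ K), ← mul_assoc]
    refine (det_mul_mul_transpose_le _ _).trans ?_
    gcongr
    exact ih fun ℓ h1 h2 => hG ℓ (by omega) h2

end Network

lemma sqrt_prod_div_pow_le_exp {L1 L K : ℕ} (hK : 0 < K) (hL1 : L1 ≤ L) {f : ℕ → ℝ}
    (hf : ∀ j, 0 ≤ f j) {c t x : ℝ} (ht : 0 < t) (hx : 0 < x)
    (hsum : ∑ j ∈ Ioc 0 L, f j ^ 2 ≤ L * K + c) :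
    √(∏ j ∈ Ioc L1 L, (f j ^ 2 / K) ^ K) / (t / ((∏ j ∈ Ioc 0 L1, f j) * x)) ^ K ≤
      Real.exp (1 / 2 * (c + L1 * K * Real.log K - 2 * K * Real.log (t / x))) := by
  have hKR : (0 : ℝ) < K := by exact_mod_cast hK
  set P := ∏ j ∈ Ioc 0 L1, f j
  set R := ∏ j ∈ Ioc L1 L, f j ^ 2
  have hP : 0 ≤ P := prod_nonneg fun j _ => hf j
  have hR : 0 ≤ R := prod_nonneg fun j _ => sq_nonneg (f j)
  have hB : 0 ≤ R / (K : ℝ) ^ (L - L1) := by positivity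
  have hAM : P ^ 2 * R ≤ (K : ℝ) ^ L * Real.exp (c / K) := by
    have h := Real.prod_le_pow_card_mul_exp (Ioc 0 L) (fun j _ => sq_nonneg (f j)) hKR
      (by simpa using hsum)
    rwa [Nat.card_Ioc, Nat.sub_zero, ← prod_Ioc_consecutive _ (Nat.zero_le L1) hL1,
      prod_pow] at h
  have hlhs : √(∏ j ∈ Ioc L1 L, (f j ^ 2 / K) ^ K) / (t / (P * x)) ^ K =
      √((R / (K : ℝ) ^ (L - L1) * (P * x / t) ^ 2) ^ K) := by
    rw [prod_pow, prod_div_distrib, prod_const, Nat.card_Ioc, mul_pow,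
      Real.sqrt_mul (pow_nonneg hB K), ← pow_mul, mul_comm 2 K, pow_mul, Real.sqrt_sq (pow_nonneg (by positivity) K),
      div_eq_mul_inv, ← inv_pow, inv_div]
  have hrhs : Real.exp (1 / 2 * (c + L1 * K * Real.log K - 2 * K * Real.log (t / x))) =
      √(((K : ℝ) ^ L1 * Real.exp (c / K) * (x / t) ^ 2) ^ K) := by
    rw [← Real.exp_log (by positivity : (0 : ℝ) < (K : ℝ) ^ L1 * Real.exp (c / K) * (x / t) ^ 2),
      ← Real.exp_nat_mul, ← Real.exp_half, Real.log_mul (by positivity) (by positivity),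
      Real.log_mul (by positivity) (by positivity), Real.log_exp, Real.log_pow, Real.log_pow,
      Real.log_div hx.ne' ht.ne', Real.log_div ht.ne' hx.ne']
    congr 1
    field_simp
    ring
  rw [hlhs, hrhs]
  refine Real.sqrt_le_sqrt (pow_le_pow_left₀ (by positivity) ?_ K)
  have hKL : (K : ℝ) ^ L = K ^ L1 * K ^ (L - L1) := by rw [← pow_add, Nat.add_sub_cancel' hL1]
  calc R / (K : ℝ) ^ (L - L1) * (P * x / t) ^ 2 = P ^ 2 * R / K ^ (L - L1) * (x / t) ^ 2 := by ring
    _ ≤ K ^ L * Real.exp (c / K) / K ^ (L - L1) * (x / t) ^ 2 := by gcongr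
    _ = K ^ L1 * Real.exp (c / K) * (x / t) ^ 2 := by rw [hKL]; field_simp

theorem statement12_general
    (L1 L2 L : ℕ) (hL1 : 1 ≤ L1) (hLdef : L = L1 + L2)
    (n : ℕ → ℕ) (N K : ℕ) (hK : n L = K)
    (σ : ℝ → ℝ)
    (hσ : ∀ x : ℝ, |σ x| ≤ |x|)
    (W : ∀ ℓ : ℕ, Matrix (Fin (n ℓ)) (Fin (n (ℓ - 1))) ℝ)
    (X : Matrix (Fin (n 0)) (Fin N) ℝ)
    (Y : Matrix (Fin (n L)) (Fin N) ℝ)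
    (Z : ∀ ℓ : ℕ, Matrix (Fin (n ℓ)) (Fin N) ℝ)
    (hZ0 : Z 0 = X)
    (hZnl : ∀ ℓ, 1 ≤ ℓ → ℓ ≤ L1 → Z ℓ = (W ℓ * Z (ℓ - 1)).map σ)
    (hZlin : ∀ ℓ, L1 + 1 ≤ ℓ → ℓ ≤ L → Z ℓ = W ℓ * Z (ℓ - 1))
    -- partial products of the linear head: G ℓ = W_L ⋯ W_{ℓ+1}
    (G : ∀ ℓ : ℕ, Matrix (Fin (n L)) (Fin (n ℓ)) ℝ)
    (hGL : G L = 1)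
    (hGrec : ∀ ℓ, L1 ≤ ℓ → ℓ < L → G ℓ = G (ℓ + 1) * W (ℓ + 1))
    (ε1 c : ℝ)
    -- approximate interpolation
    (hA1 : frobNorm (Z L - Y) ≤ ε1)
    (hε1 : ε1 < sval Y K)
    -- bounded parameters
    (hθ : ∑ ℓ ∈ Finset.Icc 1 L, frobNorm (W ℓ) ^ 2 ≤ (L : ℝ) * K + c) :
    kappa (G L1) ≤
      Real.exp ((1 / 2) * (c + (L1 : ℝ) * K * Real.log K -
        2 * K * Real.log ((sval Y K - ε1) / opNorm X))) := by
  subst hK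
  have hL1L : L1 ≤ L := by omega
  obtain ⟨hkN, hK, hYk⟩ := sval_eq_svals_of_pos Y (((frobNorm_nonneg _).trans hA1).trans_lt hε1)
  set k : Fin N := ⟨n L - 1, hkN⟩
  set t := sval Y (n L) - ε1
  have ht : 0 < t := sub_pos.2 hε1
  have hZL : Z L = G L1 * Z L1 := by
    simpa [hGL] using mul_eq_mul_of_linear_layers W G Z hL1L hGrec hZlin
  have hweyl : t ≤ svals (G L1 * Z L1) k := by
    rw [← hZL]
    linarith [svals_sub_frobNorm_le (Z L) Y k]
  set P := ∏ j ∈ Ioc 0 L1, frobNorm (W j)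
  have hZL1 : frobNorm (Z L1) ≤ P * opNorm X := hZ0 ▸ frobNorm_le_prod_mul_opNorm W Z hσ hL1 hZnl
  obtain ⟨hkL1, hGk⟩ := exists_lt_and_svals_mul_le (G L1) (Z L1) k (c := P * opNorm X)
    (fun v => (norm_toLpLin_le_frobNorm _ v).trans (by gcongr)) (ht.trans_le hweyl)
  have hPX : 0 < P * opNorm X :=
    pos_of_mul_pos_right (ht.trans_le (hweyl.trans hGk)) (svals_nonneg _ _)
  have hdet := det_mul_transpose_le_prod W G hL1L hGrec
  rw [hGL, transpose_one, Matrix.mul_one, det_one, one_mul] at hdet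
  calc kappa (G L1) ≤ √(G L1 * (G L1)ᵀ).det / (t / (P * opNorm X)) ^ n L :=
        kappa_le_sqrt_det_div_pow (G L1) hkL1 (div_pos ht hPX)
          ((div_le_iff₀ hPX).2 (hweyl.trans hGk))
    _ ≤ √(∏ j ∈ Ioc L1 L, (frobNorm (W j) ^ 2 / n L) ^ n L) / (t / (P * opNorm X)) ^ n L := by
        gcongr
    _ ≤ _ := sqrt_prod_div_pow_le_exp (by omega) hL1L (fun j => frobNorm_nonneg _) ht
        (pos_of_mul_pos_right hPX (prod_nonneg fun j _ => frobNorm_nonneg _))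
        (by rwa [← Finset.Icc_add_one_left_eq_Ioc, zero_add])

/-- Proposition 5.1: approximate interpolation and bounded parameter norm
imply bounded conditioning of the product of the linear layers. -/
theorem statement12
    (L1 L2 L : ℕ) (hL1 : 1 ≤ L1) (hL2 : 1 ≤ L2) (hLdef : L = L1 + L2)
    (n : ℕ → ℕ) (N K : ℕ) (hK : n L = K)
    (σ : ℝ → ℝ)
    (hσ : ∀ x : ℝ, |σ x| ≤ |x|)
    (W : ∀ ℓ : ℕ, Matrix (Fin (n ℓ)) (Fin (n (ℓ - 1))) ℝ)
    (X : Matrix (Fin (n 0)) (Fin N) ℝ)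
    (hX : 0 < opNorm X)
    (Y : Matrix (Fin (n L)) (Fin N) ℝ)
    (cls : Fin N → Fin (n L))
    (hY : ∀ i j, Y i j = if i = cls j then 1 else 0)
    (Z : ∀ ℓ : ℕ, Matrix (Fin (n ℓ)) (Fin N) ℝ)
    (hZ0 : Z 0 = X)
    (hZnl : ∀ ℓ, 1 ≤ ℓ → ℓ ≤ L1 → Z ℓ = (W ℓ * Z (ℓ - 1)).map σ)
    (hZlin : ∀ ℓ, L1 + 1 ≤ ℓ → ℓ ≤ L → Z ℓ = W ℓ * Z (ℓ - 1))
    -- partial products of the linear head: G ℓ = W_L ⋯ W_{ℓ+1}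
    (G : ∀ ℓ : ℕ, Matrix (Fin (n L)) (Fin (n ℓ)) ℝ)
    (hGL : G L = 1)
    (hGrec : ∀ ℓ, L1 ≤ ℓ → ℓ < L → G ℓ = G (ℓ + 1) * W (ℓ + 1))
    (ε1 c : ℝ)
    -- approximate interpolation
    (hA1 : frobNorm (Z L - Y) ≤ ε1)
    (hε1 : ε1 < sval Y K)
    -- bounded parameters
    (hθ : ∑ ℓ ∈ Finset.Icc 1 L, frobNorm (W ℓ) ^ 2 ≤ (L : ℝ) * K + c) :
    kappa (G L1) ≤
      Real.exp ((1 / 2) * (c + (L1 : ℝ) * K * Real.log K -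
        2 * K * Real.log ((sval Y K - ε1) / opNorm X))) :=
  statement12_general L1 L2 L hL1 hLdef n N K hK σ hσ W X Y Z hZ0 hZnl hZlin G hGL hGrec ε1 c hA1
    hε1 hθ
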